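/- Let d be a positive integer, β ≥ 0 a real number, and g : ℝ × ℝ^d → ℝ a function satisfying the monotonicity condition: for all y₁, y₂ ∈ ℝ and z ∈ ℝ^d, −sgn(y₁ − y₂)·(g(y₁,z) − g(y₂,z)) ≤ β|y₁ − y₂|. Fix q ∈ ℝ^d and assume that for every y ∈ ℝ the set S(y) := {⟨q,z⟩ − g(y,z) : z ∈ ℝ^d} is bounded above, and define f(y) := sup S(y). Then for all y₁, y₂ ∈ ℝ one has sgn(y₁ − y₂)·(f(y₁) − f(y₂)) ≤ β|y₁ − y₂|. -/
import Mathlib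

open RealInnerProductSpace

/-- sgn(x) := 1 if x > 0 and −1 if x ≤ 0, as in the paper. -/
noncomputable def sgn (x : ℝ) : ℝ := if 0 < x then 1 else -1

theorem legendre_transform_monotonicity (d : ℕ) (hd : 0 < d) (β : ℝ) (hβ : 0 ≤ β)
    (g : ℝ × EuclideanSpace ℝ (Fin d) → ℝ)
    (hmono : ∀ (y₁ y₂ : ℝ) (z : EuclideanSpace ℝ (Fin d)),
      -sgn (y₁ - y₂) * (g (y₁, z) - g (y₂, z)) ≤ β * |y₁ - y₂|)
    (q : EuclideanSpace ℝ (Fin d))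
    (hbdd : ∀ y : ℝ,
      BddAbove {r : ℝ | ∃ z : EuclideanSpace ℝ (Fin d), r = ⟪q, z⟫ - g (y, z)})
    (f : ℝ → ℝ)
    (hf : ∀ y : ℝ,
      f y = sSup {r : ℝ | ∃ z : EuclideanSpace ℝ (Fin d), r = ⟪q, z⟫ - g (y, z)}) :
    ∀ y₁ y₂ : ℝ, sgn (y₁ - y₂) * (f y₁ - f y₂) ≤ β * |y₁ - y₂| := by
  intro y₁ y₂
  have hle : ∀ a b : ℝ, (∀ z : EuclideanSpace ℝ (Fin d),
      g (b, z) - g (a, z) ≤ β * |y₁ - y₂|) → f a ≤ f b + β * |y₁ - y₂| := by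
    intro a b hz
    rw [hf a]
    refine csSup_le ⟨⟪q, (0 : EuclideanSpace ℝ (Fin d))⟫ - g (a, 0), 0, rfl⟩ ?_
    rintro r ⟨z, rfl⟩
    have h1 : ⟪q, z⟫ - g (b, z) ≤ f b := by
      rw [hf b]; exact le_csSup (hbdd b) ⟨z, rfl⟩
    have := hz z
    linarith
  unfold sgn at *
  split_ifs with h
  · have key := hle y₁ y₂ (fun z => by have := hmono y₁ y₂ z; simp [h] at this; linarith)
    linarith
  · have key := hle y₂ y₁ (fun z => by have := hmono y₁ y₂ z; simp [h] at this; linarith)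
    linarith
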